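/- arXiv:2310.20622 — 2 statements merged into one kernel-verified Lean document; each statement's English description precedes it below -/
import Mathlib

section
/- For any real numbers a, b ≥ 0, any real p > 1 that is not an integer, and any ε ∈ (0,1], there is a constant C(p) depending only on p such that (a+b)^p ≤ (1+ε) a^p + (C(p)/ε^{[p]/(p-[p])}) b^p, where [p] denotes the integer part of p. -/
open Real

/-- For any real `p > 1` that is not an integer, there is a constant `C(p)` such that for all
reals `a, b ≥ 0` and `ε ∈ (0,1]`,
`(a+b)^p ≤ (1+ε) a^p + (C(p)/ε^(⌊p⌋/(p-⌊p⌋))) b^p`. -/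
theorem stmt1 (p : ℝ) (hp : 1 < p) (hpnotint : ∀ m : ℤ, p ≠ m) :
    ∃ C > 0, ∀ a b ε : ℝ, 0 ≤ a → 0 ≤ b → 0 < ε → ε ≤ 1 →
      (a + b) ^ p ≤ (1 + ε) * a ^ p + C / ε ^ ((⌊p⌋ : ℝ) / (p - ⌊p⌋)) * b ^ p := by
  have hp0 : (0:ℝ) < p := by linarith
  refine ⟨(2*p) ^ (p-1), Real.rpow_pos_of_pos (by linarith) _, ?_⟩
  intro a b ε ha hb hε hε1
  set n : ℝ := (⌊p⌋ : ℝ) with hn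
  have hn1 : (1:ℝ) ≤ n := by
    have : (1:ℤ) ≤ ⌊p⌋ := Int.le_floor.2 (by push_cast; linarith)
    rw [hn]; exact_mod_cast this
  have hf0 : 0 < p - n := by
    rcases lt_or_eq_of_le (Int.floor_le p) with h | h
    · linarith
    · exact absurd h.symm (hpnotint ⌊p⌋)
  have hf1 : p - n < 1 := by
    have := Int.lt_floor_add_one p
    simp only [hn]; push_cast; linarith
  have hθ : p - 1 ≤ n / (p - n) := by
    rw [le_div_iff₀ hf0]
    nlinarith [mul_nonneg (by linarith : (0:ℝ) ≤ 1-(p-n)) (by linarith : (0:ℝ) ≤ n + (p-n))]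
  set t : ℝ := ε / (2*p) with htdef
  have ht0 : 0 < t := div_pos hε (by linarith)
  have ht1 : t < 1 := by
    rw [htdef, div_lt_one (by linarith)]; linarith
  have h1t : 0 < 1 - t := by linarith
  -- convexity of x ^ p
  have key := (convexOn_rpow hp.le).2
    (Set.mem_Ici.2 (div_nonneg ha h1t.le)) (Set.mem_Ici.2 (div_nonneg hb ht0.le))
    (by linarith : (0:ℝ) ≤ 1 - t) ht0.le (by ring)
  simp only [smul_eq_mul] at key
  rw [mul_div_cancel₀ a h1t.ne', mul_div_cancel₀ b ht0.ne'] at key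
  have hap : (0:ℝ) ≤ a ^ p := Real.rpow_nonneg ha p
  have hbp : (0:ℝ) ≤ b ^ p := Real.rpow_nonneg hb p
  refine key.trans (add_le_add ?_ ?_)
  · -- (1-t) * (a/(1-t))^p ≤ (1+ε) * a^p
    rw [Real.div_rpow ha h1t.le]
    have hbern : 1 - p * t ≤ (1-t) ^ p := by
      have := one_add_mul_self_le_rpow_one_add (s := -t) (by linarith) hp.le
      simpa [sub_eq_add_neg, mul_neg] using this
    have hpt : p * t = ε / 2 := by
      rw [htdef]; field_simp
    have h1 : (1 - t) ≤ (1 + ε) * (1-t)^p := by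
      calc (1 - t) ≤ 1 := by linarith
        _ ≤ (1 + ε) * (1 - p * t) := by rw [hpt]; nlinarith
        _ ≤ (1 + ε) * (1-t)^p := by
            apply mul_le_mul_of_nonneg_left hbern (by linarith)
    have htp : (0:ℝ) < (1-t) ^ p := Real.rpow_pos_of_pos h1t p
    calc (1-t) * (a^p / (1-t)^p) = a^p * (1-t) / (1-t)^p := by ring
      _ ≤ (1+ε) * a^p := by
          rw [div_le_iff₀ htp]
          nlinarith [mul_le_mul_of_nonneg_left h1 hap]
  · -- t * (b/t)^p ≤ C/ε^θ * b^p
    rw [Real.div_rpow hb ht0.le]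
    have hts : t * (b^p / t^p) = t^(1-p) * b^p := by
      rw [Real.rpow_sub ht0, Real.rpow_one]; field_simp
    rw [hts]
    apply mul_le_mul_of_nonneg_right _ hbp
    -- t^(1-p) ≤ (2p)^(p-1) / ε^(n/(p-n))
    have h2p : (0:ℝ) < 2*p := by linarith
    have ht1p : t ^ (1-p) = (2*p)^(p-1) * ε^(1-p) := by
      have hone : (2*p)^(p-1) * (2*p)^(1-p) = 1 := by
        rw [← Real.rpow_add h2p]; norm_num
      rw [htdef, Real.div_rpow hε.le h2p.le, div_eq_iff (Real.rpow_pos_of_pos h2p _).ne']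
      linear_combination (-(ε^(1-p))) * hone
    rw [ht1p, div_eq_mul_inv, ← Real.rpow_neg hε.le]
    apply mul_le_mul_of_nonneg_left _ (Real.rpow_nonneg h2p.le _)
    exact Real.rpow_le_rpow_of_exponent_ge hε hε1 (by linarith)
end

section
/- Let n ≥ 2 and let θ₁ > -(n-1) and θ₂ satisfy either θ₂ ≥ 0, or (θ₂ < 0 and θ₁ + θ₂ > -n). Then the weight w(x) = |x'|^{θ₁} |x|^{θ₂} on ℝⁿ (where x' = (x₁,…,x_{n-1})) is locally integrable, so dμ = w dx defines a Radon measure, and moreover there exists a constant C = C(n, θ₁, θ₂) > 0 such that for every R > 0, C⁻¹ R^{n+θ₁+θ₂} ≤ μ(B_R) ≤ C R^{n+θ₁+θ₂}, where B_R is the ball of radius R centered at the origin. -/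
open MeasureTheory

/-- The Euclidean norm of `x' = (x₁, …, x_{n-1})`, the first `n-1` coordinates of `x`. -/
noncomputable def primeNorm (n : ℕ) (x : EuclideanSpace ℝ (Fin n)) : ℝ :=
  Real.sqrt (∑ i : Fin n, if (i : ℕ) < n - 1 then x i ^ 2 else 0)

/-- The anisotropic weight `w(x) = |x'|^θ₁ |x|^θ₂`. -/
noncomputable def anisoWeight (n : ℕ) (θ₁ θ₂ : ℝ) (x : EuclideanSpace ℝ (Fin n)) : ℝ :=
  primeNorm n x ^ θ₁ * ‖x‖ ^ θ₂

/-! On the unit ball write `θ₂⁻ = min θ₂ 0`. Since `|x|` dominates both `|x'|` and `|xₙ|`,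
`|x|^θ₂ ≤ |x|^θ₂⁻ ≤ |x'|^(θ₂⁻ - b) |xₙ|^b` for every `b ∈ [θ₂⁻, 0]`, and since `|x'|` dominates
each `|xᵢ|`, `i < n`, also `|x'|^a ≤ ∏_{i<n} |xᵢ|^(a/(n-1))` for `a ≤ 0`. The hypotheses on
`θ₁, θ₂` are exactly what allows choosing `b` so that all resulting exponents exceed `-1`; the
weight is then dominated by a product of integrable functions of one variable each. The weight is
homogeneous of degree `θ₁ + θ₂`, hence `μ(B_R) = R^(n+θ₁+θ₂) μ(B_1)`, and `μ(B_1) > 0` because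
the weight vanishes only on the null set `{x' = 0}`. -/

open Metric Set Pointwise

section PrimeNorm

variable {n : ℕ}

lemma primeNorm_nonneg (x : EuclideanSpace ℝ (Fin n)) : 0 ≤ primeNorm n x :=
  Real.sqrt_nonneg _

lemma primeNorm_le_norm (x : EuclideanSpace ℝ (Fin n)) : primeNorm n x ≤ ‖x‖ := by
  rw [EuclideanSpace.norm_eq]
  refine Real.sqrt_le_sqrt (Finset.sum_le_sum fun i _ => ?_)
  split_ifs
  · rw [Real.norm_eq_abs, sq_abs]
  · positivity

lemma abs_apply_le_primeNorm (x : EuclideanSpace ℝ (Fin n)) {i : Fin n} (hi : (i : ℕ) < n - 1) :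
    |x i| ≤ primeNorm n x := by
  rw [← Real.sqrt_sq_eq_abs]
  refine Real.sqrt_le_sqrt ?_
  simpa [hi] using Finset.single_le_sum
    (f := fun j : Fin n => if (j : ℕ) < n - 1 then x j ^ 2 else 0) (fun j _ => by positivity)
    (Finset.mem_univ i)

lemma primeNorm_smul (r : ℝ) (x : EuclideanSpace ℝ (Fin n)) :
    primeNorm n (r • x) = |r| * primeNorm n x := by
  have h (i : Fin n) : (if (i : ℕ) < n - 1 then (r • x) i ^ 2 else 0)
      = r ^ 2 * (if (i : ℕ) < n - 1 then x i ^ 2 else 0) := by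
    split_ifs <;> simp [mul_pow]
  rw [primeNorm, primeNorm, Finset.sum_congr rfl fun i _ => h i, ← Finset.mul_sum,
    Real.sqrt_mul (sq_nonneg r), Real.sqrt_sq_eq_abs]

lemma continuous_primeNorm : Continuous (primeNorm n) := by
  refine Real.continuous_sqrt.comp (continuous_finsetSum _ fun i _ => ?_)
  split_ifs
  · exact ((EuclideanSpace.proj i).continuous).pow 2
  · exact continuous_const

end PrimeNorm

section Weight

variable {n : ℕ} {θ₁ θ₂ : ℝ}

lemma anisoWeight_nonneg (x : EuclideanSpace ℝ (Fin n)) : 0 ≤ anisoWeight n θ₁ θ₂ x := by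
  unfold anisoWeight
  have := primeNorm_nonneg x
  positivity

lemma measurable_anisoWeight : Measurable (anisoWeight n θ₁ θ₂) :=
  (continuous_primeNorm.measurable.pow_const _).mul (continuous_norm.measurable.pow_const _)

lemma anisoWeight_pos {x : EuclideanSpace ℝ (Fin n)} {i : Fin n} (hi : (i : ℕ) < n - 1)
    (hx : x i ≠ 0) : 0 < anisoWeight n θ₁ θ₂ x := by
  have hP : 0 < primeNorm n x := (abs_pos.mpr hx).trans_le (abs_apply_le_primeNorm x hi)
  exact mul_pos (Real.rpow_pos_of_pos hP _)
    (Real.rpow_pos_of_pos (hP.trans_le (primeNorm_le_norm x)) _)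

lemma anisoWeight_smul {r : ℝ} (hr : 0 < r) (x : EuclideanSpace ℝ (Fin n)) :
    anisoWeight n θ₁ θ₂ (r • x) = r ^ (θ₁ + θ₂) * anisoWeight n θ₁ θ₂ x := by
  rw [anisoWeight, anisoWeight, primeNorm_smul, norm_smul, Real.norm_eq_abs, abs_of_pos hr,
    Real.mul_rpow hr.le (primeNorm_nonneg x), Real.mul_rpow hr.le (norm_nonneg x),
    Real.rpow_add hr]
  ring

end Weight

lemma Real.rpow_le_rpow_sub_mul_rpow {p t N s b : ℝ} (hp : 0 < p) (hpN : p ≤ N) (ht : 0 < t)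
    (htN : t ≤ N) (hsb : s ≤ b) (hb : b ≤ 0) : N ^ s ≤ p ^ (s - b) * t ^ b := by
  have hN : 0 < N := hp.trans_le hpN
  calc N ^ s = N ^ (s - b) * N ^ b := by rw [← Real.rpow_add hN, sub_add_cancel]
    _ ≤ p ^ (s - b) * t ^ b :=
      mul_le_mul (Real.rpow_le_rpow_of_nonpos hp hpN (by linarith))
        (Real.rpow_le_rpow_of_nonpos ht htN hb) (by positivity) (by positivity)

lemma Real.rpow_mul_card_le_prod_rpow {ι : Type*} (s : Finset ι) {y : ι → ℝ} {P d : ℝ}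
    (hy : ∀ i ∈ s, 0 < y i ∧ y i ≤ P) (hd : d ≤ 0) : P ^ (d * s.card) ≤ ∏ i ∈ s, y i ^ d := by
  rcases s.eq_empty_or_nonempty with rfl | ⟨j, hj⟩
  · simp
  have hP : 0 ≤ P := (hy j hj).1.le.trans (hy j hj).2
  rw [Real.rpow_mul_natCast hP, ← Finset.prod_const]
  exact Finset.prod_le_prod (fun i _ => Real.rpow_nonneg hP _)
    fun i hi => Real.rpow_le_rpow_of_nonpos (hy i hi).1 (hy i hi).2 hd

lemma integrableOn_abs_rpow_Ioc {c : ℝ} (hc : -1 < c) :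
    IntegrableOn (fun t : ℝ => |t| ^ c) (Ioc (-1) 1) := by
  have hpos : IntervalIntegrable (fun t : ℝ => |t| ^ c) volume 0 1 := by
    rw [intervalIntegrable_iff_integrableOn_Ioc_of_le zero_le_one]
    refine (intervalIntegrable_iff_integrableOn_Ioc_of_le zero_le_one).mp
      (intervalIntegral.intervalIntegrable_rpow' hc) |>.congr_fun (fun t ht => ?_) measurableSet_Ioc
    rw [abs_of_pos ht.1]
  have hneg : IntervalIntegrable (fun t : ℝ => |t| ^ c) volume (-1) 0 := by
    simpa using (hpos.comp_sub_left 0).symm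
  rw [← intervalIntegrable_iff_integrableOn_Ioc_of_le (by norm_num)]
  exact hneg.trans hpos

lemma integrable_prod_indicator_abs_rpow {ι : Type*} [Fintype ι] {c : ι → ℝ}
    (hc : ∀ i, -1 < c i) :
    Integrable (fun x : EuclideanSpace ℝ ι => ∏ i, (Ioc (-1) 1).indicator (|·| ^ c i) (x i)) := by
  have h : Integrable (fun y : ι → ℝ => ∏ i, (Ioc (-1) 1).indicator (|·| ^ c i) (y i)) :=
    Integrable.fintype_prod (f := fun i => (Ioc (-1 : ℝ) 1).indicator (|·| ^ c i))
      fun i => (integrable_indicator_iff measurableSet_Ioc).mpr (integrableOn_abs_rpow_Ioc (hc i))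
  exact ((EuclideanSpace.volume_preserving_symm_measurableEquiv_toLp ι).integrable_comp_emb
    (MeasurableEquiv.measurableEmbedding _)).mpr h

lemma EuclideanSpace.ae_apply_ne_zero {ι : Type*} [Fintype ι] (i : ι) :
    ∀ᵐ x : EuclideanSpace ℝ ι, x i ≠ 0 := by
  classical
  have hker : LinearMap.ker (EuclideanSpace.proj i : EuclideanSpace ℝ ι →L[ℝ] ℝ).toLinearMap
      ≠ ⊤ := by
    rw [Ne, LinearMap.ker_eq_top]
    intro h
    simpa using LinearMap.congr_fun h (EuclideanSpace.single i 1)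
  exact measure_mono_null (fun x hx => by simpa using hx) (Measure.addHaar_submodule volume _ hker)

lemma integrableOn_smul_set_iff {E F : Type*} [NormedAddCommGroup E] [NormedSpace ℝ E]
    [MeasurableSpace E] [BorelSpace E] [FiniteDimensional ℝ E] (μ : Measure E)
    [μ.IsAddHaarMeasure] [NormedAddCommGroup F] {f : E → F} {s : Set E} {R : ℝ} (hR : R ≠ 0) :
    IntegrableOn f (R • s) μ ↔ IntegrableOn (fun x => f (R • x)) s μ := by
  let e : E ≃ᵐ E := (Homeomorph.smul (Units.mk0 R hR)).toMeasurableEquiv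
  have hs : e ⁻¹' (R • s) = s := by ext x; exact smul_mem_smul_set_iff₀ hR s x
  have key := integrableOn_map_equiv e (f := f) (μ := μ) (s := R • s)
  rw [hs] at key
  refine Iff.trans ?_ key
  change _ ↔ IntegrableOn f (R • s) (μ.map (R • ·))
  rw [Measure.map_addHaar_smul μ hR, IntegrableOn, IntegrableOn, Measure.restrict_smul,
    integrable_smul_measure (by simp [hR]) ENNReal.ofReal_ne_top]

lemma exists_exponent_split {n : ℕ} {θ₁ θ₂ : ℝ} (hθ₁ : -((n : ℝ) - 1) < θ₁)
    (hθ₂ : 0 ≤ θ₂ ∨ (θ₂ < 0 ∧ -(n : ℝ) < θ₁ + θ₂)) :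
    ∃ b : ℝ, -1 < b ∧ b ≤ 0 ∧ min θ₂ 0 ≤ b ∧ -((n : ℝ) - 1) < θ₁ + min θ₂ 0 - b := by
  rcases hθ₂ with hθ₂ | ⟨hθ₂, hsum⟩
  · exact ⟨0, by norm_num, le_rfl, by simp [hθ₂], by simp [hθ₂]; linarith⟩
  · obtain ⟨b, hlo, hhi⟩ :=
      exists_between (show max (-1) θ₂ < min 0 ((n : ℝ) - 1 + θ₁ + θ₂) by
        simp only [max_lt_iff, lt_min_iff]; constructor <;> constructor <;> linarith)
    simp only [max_lt_iff, lt_min_iff] at hlo hhi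
    exact ⟨b, hlo.1, hhi.1.le, by simp [hθ₂.le, hlo.2.le], by simp [hθ₂.le]; linarith⟩

section WeightOnBalls

variable {n : ℕ} {θ₁ θ₂ : ℝ}

lemma exists_anisoWeight_le_prod_abs_rpow (hn : 2 ≤ n) (hθ₁ : -((n : ℝ) - 1) < θ₁)
    (hθ₂ : 0 ≤ θ₂ ∨ (θ₂ < 0 ∧ -(n : ℝ) < θ₁ + θ₂)) :
    ∃ c : Fin n → ℝ, (∀ i, -1 < c i) ∧ ∀ x : EuclideanSpace ℝ (Fin n), ‖x‖ < 1 →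
      (∀ i, x i ≠ 0) → anisoWeight n θ₁ θ₂ x ≤ ∏ i, |x i| ^ c i := by
  obtain ⟨b, hb₁, hb₀, hθ₂b, hab⟩ := exists_exponent_split hθ₁ hθ₂
  obtain ⟨k, rfl⟩ : ∃ k, n = k + 1 := ⟨n - 1, by omega⟩
  have hk : (0 : ℝ) < k := by exact_mod_cast (show 0 < k by omega)
  set a := θ₁ + min θ₂ 0 - b
  set d := min a 0 / k
  have hd₁ : -1 < d := by
    rw [lt_div_iff₀ hk]
    push_cast at hab
    exact lt_min (by linarith) (by linarith)
  have hd₀ : d ≤ 0 := div_nonpos_of_nonpos_of_nonneg (min_le_right _ _) hk.le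
  have hdk : d * k ≤ a := by rw [div_mul_cancel₀ _ hk.ne']; exact min_le_left _ _
  refine ⟨Fin.lastCases b fun _ => d, fun i => ?_, fun x hx hx0 => ?_⟩
  · cases i using Fin.lastCases <;> simp [hb₁, hd₁]
  set P := primeNorm (k + 1) x
  have hcoord (i : Fin k) : 0 < |x i.castSucc| ∧ |x i.castSucc| ≤ P :=
    ⟨abs_pos.mpr (hx0 _), abs_apply_le_primeNorm x (by simp)⟩
  have hP : 0 < P := (hcoord ⟨0, by omega⟩).1.trans_le (hcoord _).2
  have hP₁ : P ≤ 1 := (primeNorm_le_norm x).trans hx.le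
  have hlast : 0 < |x (Fin.last k)| := abs_pos.mpr (hx0 _)
  calc anisoWeight (k + 1) θ₁ θ₂ x = P ^ θ₁ * ‖x‖ ^ θ₂ := rfl
    _ ≤ P ^ θ₁ * ‖x‖ ^ min θ₂ 0 := by
      refine mul_le_mul_of_nonneg_left ?_ (Real.rpow_nonneg hP.le _)
      exact Real.rpow_le_rpow_of_exponent_ge (hP.trans_le (primeNorm_le_norm x)) hx.le
        (min_le_left _ _)
    _ ≤ P ^ θ₁ * (P ^ (min θ₂ 0 - b) * |x (Fin.last k)| ^ b) := by
      refine mul_le_mul_of_nonneg_left ?_ (Real.rpow_nonneg hP.le _)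
      exact Real.rpow_le_rpow_sub_mul_rpow hP (primeNorm_le_norm x) hlast
        (PiLp.norm_apply_le x _) hθ₂b hb₀
    _ = P ^ a * |x (Fin.last k)| ^ b := by
      rw [← mul_assoc, ← Real.rpow_add hP, ← add_sub_assoc]
    _ ≤ P ^ (d * k) * |x (Fin.last k)| ^ b := by
      refine mul_le_mul_of_nonneg_right ?_ (Real.rpow_nonneg hlast.le _)
      exact Real.rpow_le_rpow_of_exponent_ge hP hP₁ hdk
    _ ≤ (∏ i : Fin k, |x i.castSucc| ^ d) * |x (Fin.last k)| ^ b := by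
      refine mul_le_mul_of_nonneg_right ?_ (Real.rpow_nonneg hlast.le _)
      simpa using Real.rpow_mul_card_le_prod_rpow Finset.univ (fun i _ => hcoord i) hd₀
    _ = ∏ i, |x i| ^ (Fin.lastCases (motive := fun _ => ℝ) b (fun _ => d) i) := by
      simp [Fin.prod_univ_castSucc]

lemma integrableOn_ball_one_anisoWeight (hn : 2 ≤ n) (hθ₁ : -((n : ℝ) - 1) < θ₁)
    (hθ₂ : 0 ≤ θ₂ ∨ (θ₂ < 0 ∧ -(n : ℝ) < θ₁ + θ₂)) :
    IntegrableOn (anisoWeight n θ₁ θ₂) (ball 0 1) := by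
  obtain ⟨c, hc, hle⟩ := exists_anisoWeight_le_prod_abs_rpow hn hθ₁ hθ₂
  refine (integrable_prod_indicator_abs_rpow hc).integrableOn.mono'
    measurable_anisoWeight.aestronglyMeasurable ?_
  filter_upwards [ae_restrict_mem measurableSet_ball,
    ae_restrict_of_ae (ae_all_iff.2 EuclideanSpace.ae_apply_ne_zero)] with x hx hx0
  rw [mem_ball_zero_iff] at hx
  rw [Real.norm_of_nonneg (anisoWeight_nonneg x)]
  refine (hle x hx hx0).trans_eq
    (Finset.prod_congr rfl fun i _ => (indicator_of_mem (f := (|·| ^ c i)) ?_).symm)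
  have hxi := abs_lt.mp ((PiLp.norm_apply_le x i).trans_lt hx)
  exact ⟨hxi.1, hxi.2.le⟩

lemma integrableOn_ball_anisoWeight (hn : 2 ≤ n) (hθ₁ : -((n : ℝ) - 1) < θ₁)
    (hθ₂ : 0 ≤ θ₂ ∨ (θ₂ < 0 ∧ -(n : ℝ) < θ₁ + θ₂)) {R : ℝ} (hR : 0 < R) :
    IntegrableOn (anisoWeight n θ₁ θ₂) (ball 0 R) := by
  rw [← smul_unitBall_of_pos hR, integrableOn_smul_set_iff volume hR.ne']
  simp_rw [anisoWeight_smul hR]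
  exact (integrableOn_ball_one_anisoWeight hn hθ₁ hθ₂).const_mul _

lemma locallyIntegrable_anisoWeight (hn : 2 ≤ n) (hθ₁ : -((n : ℝ) - 1) < θ₁)
    (hθ₂ : 0 ≤ θ₂ ∨ (θ₂ < 0 ∧ -(n : ℝ) < θ₁ + θ₂)) :
    LocallyIntegrable (anisoWeight n θ₁ θ₂) := fun x =>
  ⟨ball 0 (‖x‖ + 1), isOpen_ball.mem_nhds (by simp),
    integrableOn_ball_anisoWeight hn hθ₁ hθ₂ (by positivity)⟩

lemma setIntegral_ball_one_anisoWeight_pos (hn : 2 ≤ n) (hθ₁ : -((n : ℝ) - 1) < θ₁)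
    (hθ₂ : 0 ≤ θ₂ ∨ (θ₂ < 0 ∧ -(n : ℝ) < θ₁ + θ₂)) :
    0 < ∫ x in ball 0 1, anisoWeight n θ₁ θ₂ x := by
  let i : Fin n := ⟨0, by omega⟩
  have hi : (i : ℕ) < n - 1 := by simp [i]; omega
  rw [setIntegral_pos_iff_support_of_nonneg_ae (ae_of_all _ anisoWeight_nonneg)
    (integrableOn_ball_one_anisoWeight hn hθ₁ hθ₂)]
  calc 0 < volume (ball (0 : EuclideanSpace ℝ (Fin n)) 1) := measure_ball_pos _ _ one_pos
    _ = volume (ball 0 1 ∩ {x : EuclideanSpace ℝ (Fin n) | x i ≠ 0}) :=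
      (measure_inter_conull (ae_iff.mp (EuclideanSpace.ae_apply_ne_zero i))).symm
    _ ≤ volume (Function.support (anisoWeight n θ₁ θ₂) ∩ ball 0 1) := by
      rw [inter_comm]
      exact measure_mono (inter_subset_inter_left _ fun x hx => (anisoWeight_pos hi hx).ne')

lemma setIntegral_ball_anisoWeight {R : ℝ} (hR : 0 < R) :
    ∫ x in ball 0 R, anisoWeight n θ₁ θ₂ x
      = R ^ ((n : ℝ) + θ₁ + θ₂) * ∫ x in ball 0 1, anisoWeight n θ₁ θ₂ x := by
  have h := Measure.setIntegral_comp_smul_of_pos volume (anisoWeight n θ₁ θ₂) (ball 0 1) hR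
  simp_rw [anisoWeight_smul hR, integral_const_mul, smul_unitBall_of_pos hR,
    finrank_euclideanSpace_fin, smul_eq_mul] at h
  rw [add_assoc, Real.rpow_add hR, Real.rpow_natCast, mul_assoc, h]
  field_simp

end WeightOnBalls

/-- For `n ≥ 2`, `θ₁ > -(n-1)` and either `θ₂ ≥ 0` or (`θ₂ < 0` and `θ₁ + θ₂ > -n`), the weight
`w(x) = |x'|^θ₁ |x|^θ₂` is locally integrable (so `w dx` is a Radon measure), and there is
`C = C(n,θ₁,θ₂) > 0` with `C⁻¹ R^(n+θ₁+θ₂) ≤ μ(B_R) ≤ C R^(n+θ₁+θ₂)` for all `R > 0`. -/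
theorem stmt2 (n : ℕ) (hn : 2 ≤ n) (θ₁ θ₂ : ℝ) (hθ₁ : -((n : ℝ) - 1) < θ₁)
    (hθ₂ : 0 ≤ θ₂ ∨ (θ₂ < 0 ∧ -(n : ℝ) < θ₁ + θ₂)) :
    LocallyIntegrable (anisoWeight n θ₁ θ₂) volume ∧
    ∃ C > 0, ∀ R > (0 : ℝ),
      C⁻¹ * R ^ ((n : ℝ) + θ₁ + θ₂)
          ≤ ∫ x in Metric.ball (0 : EuclideanSpace ℝ (Fin n)) R, anisoWeight n θ₁ θ₂ x ∧
      ∫ x in Metric.ball (0 : EuclideanSpace ℝ (Fin n)) R, anisoWeight n θ₁ θ₂ x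
          ≤ C * R ^ ((n : ℝ) + θ₁ + θ₂) := by
  set I := ∫ x in ball (0 : EuclideanSpace ℝ (Fin n)) 1, anisoWeight n θ₁ θ₂ x
  have hI : 0 < I := setIntegral_ball_one_anisoWeight_pos hn hθ₁ hθ₂
  refine ⟨locallyIntegrable_anisoWeight hn hθ₁ hθ₂, max I I⁻¹, lt_max_of_lt_left hI,
    fun R hR => ?_⟩
  rw [setIntegral_ball_anisoWeight hR, mul_comm _ I]
  have hRs : 0 ≤ R ^ ((n : ℝ) + θ₁ + θ₂) := Real.rpow_nonneg hR.le _
  exact ⟨mul_le_mul_of_nonneg_right (inv_le_of_inv_le₀ hI (le_max_right _ _)) hRs,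
    mul_le_mul_of_nonneg_right (le_max_left _ _) hRs⟩
end
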